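/- arXiv:2309.04804 — 5 statements merged into one kernel-verified Lean document; each statement's English description precedes it below -/
import Mathlib

section
/- Let Φ be a Young function satisfying conditions (Φ₁) and (Φ₂). Then for every a, b ∈ ℝ one has (Φ(|a|) + Φ(|b|))/2 ≥ Φ(|(a+b)/2|) + Φ(|(a−b)/2|). -/
open Filter Set MeasureTheory

/-- A Young function `Φ` with density `φ`: `Φ t = ∫₀ᵗ φ(s) ds`, where `φ` is
right-continuous, nondecreasing on `[0,∞)`, vanishes at `0`, is positive on `(0,∞)`,
and tends to `∞` at `∞`. -/
structure IsYoungPair (Φ φ : ℝ → ℝ) : Prop where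
  integral_eq : ∀ t ≥ 0, Φ t = ∫ s in (0:ℝ)..t, φ s
  rightCont : ∀ s ≥ 0, ContinuousWithinAt φ (Set.Ici s) s
  mono : MonotoneOn φ (Set.Ici 0)
  map_zero : φ 0 = 0
  pos : ∀ s > 0, 0 < φ s
  tendsto_atTop : Filter.Tendsto φ Filter.atTop Filter.atTop

/-- If a Young function `Φ` satisfies `(Φ₁)` (i.e. `l ≤ t·φ(t)/Φ(t) ≤ m` for all `t > 0`,
with `1 < l ≤ m < ∞`) and `(Φ₂)` (i.e. `t ↦ Φ(√t)` is convex on `[0,∞)`), then for all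
real `a, b` one has `(Φ(|a|) + Φ(|b|))/2 ≥ Φ(|(a+b)/2|) + Φ(|(a−b)/2|)`. -/
theorem young_clarkson (Φ φ : ℝ → ℝ) (hY : IsYoungPair Φ φ) (l m : ℝ)
    (hl : 1 < l) (hlm : l ≤ m)
    (hPhi1 : ∀ t > 0, l ≤ t * φ t / Φ t ∧ t * φ t / Φ t ≤ m)
    (hPhi2 : ConvexOn ℝ (Set.Ici 0) (fun t => Φ (Real.sqrt t))) :
    ∀ a b : ℝ, (Φ |a| + Φ |b|) / 2 ≥ Φ |(a + b) / 2| + Φ |(a - b) / 2| := by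
  intro a b
  set Ψ : ℝ → ℝ := fun t => Φ (Real.sqrt t) with hΨ
  have hΦ0 : Φ 0 = 0 := by
    rw [hY.integral_eq 0 le_rfl, intervalIntegral.integral_same]
  have hΨ0 : Ψ 0 = 0 := by simp [hΨ, hΦ0]
  have hsuper : ∀ u v : ℝ, 0 ≤ u → 0 ≤ v → Ψ u + Ψ v ≤ Ψ (u + v) := by
    intro u v hu hv
    rcases eq_or_lt_of_le (add_nonneg hu hv) with h | ht
    · have hu0 : u = 0 := by linarith
      have hv0 : v = 0 := by linarith
      simp [hu0, hv0, hΨ0]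
    · set t := u + v with htdef
      have h1 : Ψ u ≤ (u / t) * Ψ t := by
        have := hPhi2.2 (mem_Ici.mpr le_rfl) (mem_Ici.mpr ht.le)
          (by positivity : (0:ℝ) ≤ v / t) (by positivity : (0:ℝ) ≤ u / t)
          (by rw [← add_div, add_comm, ← htdef, div_self ht.ne'])
        have harg : (v / t) • (0:ℝ) + (u / t) • t = u := by
          simp only [smul_eq_mul, mul_zero, zero_add]; field_simp [ht.ne']
        rw [harg] at this
        simpa [hΨ0] using this
      have h2 : Ψ v ≤ (v / t) * Ψ t := by
        have := hPhi2.2 (mem_Ici.mpr le_rfl) (mem_Ici.mpr ht.le)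
          (by positivity : (0:ℝ) ≤ u / t) (by positivity : (0:ℝ) ≤ v / t)
          (by rw [← add_div, ← htdef, div_self ht.ne'])
        have harg : (u / t) • (0:ℝ) + (v / t) • t = v := by
          simp only [smul_eq_mul, mul_zero, zero_add]; field_simp [ht.ne']
        rw [harg] at this
        simpa [hΨ0] using this
      have hsum : (u / t) * Ψ t + (v / t) * Ψ t = Ψ t := by
        rw [← add_mul, ← add_div, ← htdef, div_self ht.ne', one_mul]
      linarith
  have key : ∀ x : ℝ, Φ |x| = Ψ (x ^ 2) := by
    intro x
    simp [hΨ, Real.sqrt_sq_eq_abs]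
  rw [key a, key b, key ((a+b)/2), key ((a-b)/2)]
  have h3 : Ψ (((a + b) / 2) ^ 2) + Ψ (((a - b) / 2) ^ 2)
      ≤ Ψ (((a + b) / 2) ^ 2 + ((a - b) / 2) ^ 2) :=
    hsuper _ _ (sq_nonneg _) (sq_nonneg _)
  have heq : ((a + b) / 2) ^ 2 + ((a - b) / 2) ^ 2 = (1/2 : ℝ) * a ^ 2 + (1/2 : ℝ) * b ^ 2 := by
    ring
  have h4 : Ψ ((1/2 : ℝ) * a ^ 2 + (1/2 : ℝ) * b ^ 2)
      ≤ (1/2 : ℝ) * Ψ (a ^ 2) + (1/2 : ℝ) * Ψ (b ^ 2) := by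
    have := hPhi2.2 (mem_Ici.mpr (sq_nonneg a)) (mem_Ici.mpr (sq_nonneg b))
      (by norm_num : (0:ℝ) ≤ 1/2) (by norm_num : (0:ℝ) ≤ 1/2) (by norm_num)
    simpa using this
  rw [heq] at h3
  linarith
end

section
/- Let (Ω, μ) be a measure space, ω : Ω → [0,∞) measurable, Φ a Young function satisfying condition (Φ₁) with constants l and m, and u : Ω → ℝ measurable. Assume the set { ξ > 0 : ∫_Ω ω·Φ(|u|/ξ) dμ ≤ 1 } is nonempty and let N := ‖u‖_{Φ,ω} be its infimum. Then min{N^l, N^m} ≤ ∫_Ω ω(x)·Φ(|u(x)|) dμ(x) ≤ max{N^l, N^m}. -/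
open Filter Set MeasureTheory

lemma young_intInt {Φ φ : ℝ → ℝ} (hY : IsYoungPair Φ φ) {c d : ℝ} (hc : 0 ≤ c) (hd : 0 ≤ d) :
    IntervalIntegrable φ volume c d := by
  apply (hY.mono.mono ?_).intervalIntegrable
  intro x hx
  rcases Set.mem_uIcc.1 hx with h | h <;> exact le_trans (by linarith) h.1

lemma young_hasDeriv {Φ φ : ℝ → ℝ} (hY : IsYoungPair Φ φ) {t : ℝ} (ht : 0 ≤ t) :
    HasDerivWithinAt Φ (φ t) (Set.Ici t) t := by
  have hmeas : StronglyMeasurableAtFilter φ (nhdsWithin t (Set.Ioi t)) volume :=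
    ⟨Set.Ici 0, mem_of_superset self_mem_nhdsWithin (fun x hx => le_trans ht (le_of_lt hx)),
      (aemeasurable_restrict_of_monotoneOn measurableSet_Ici hY.mono).aestronglyMeasurable⟩
  have hP := intervalIntegral.integral_hasDerivWithinAt_right (s := Set.Ici t)
    (young_intInt hY le_rfl ht) hmeas ((hY.rightCont t ht).mono Set.Ioi_subset_Ici_self)
  exact hP.congr (fun x hx => hY.integral_eq x (ht.trans hx)) (hY.integral_eq t ht)

lemma young_contOn {Φ φ : ℝ → ℝ} (hY : IsYoungPair Φ φ) {b : ℝ} (hb : 0 ≤ b) :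
    ContinuousOn Φ (Set.Icc 0 b) := by
  have h1 : ContinuousOn (fun x => ∫ s in (0:ℝ)..x, φ s) (Set.uIcc 0 b) :=
    intervalIntegral.continuousOn_primitive_interval' (young_intInt hY le_rfl hb) left_mem_uIcc
  rw [Set.uIcc_of_le hb] at h1
  exact h1.congr (fun x hx => hY.integral_eq x hx.1)

lemma young_phi_pos {Φ φ : ℝ → ℝ} {l m : ℝ} (hY : IsYoungPair Φ φ) (hl0 : 0 < l)
    (hPhi1 : ∀ t > 0, l ≤ t * φ t / Φ t ∧ t * φ t / Φ t ≤ m) {t : ℝ} (ht : 0 < t) :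
    0 < Φ t := by
  have h1 := (hPhi1 t ht).1
  have h2 : 0 < t * φ t := mul_pos ht (hY.pos t ht)
  have h3 : 0 < t * φ t / Φ t := lt_of_lt_of_le hl0 h1
  rcases div_pos_iff.1 h3 with h | h
  · exact h.2
  · linarith [h.1]

lemma young_ratio {Φ φ : ℝ → ℝ} {l m : ℝ} (hY : IsYoungPair Φ φ) (hl0 : 0 < l) (hlm : l ≤ m)
    (hPhi1 : ∀ t > 0, l ≤ t * φ t / Φ t ∧ t * φ t / Φ t ≤ m)
    {a b : ℝ} (ha : 0 < a) (hab : a ≤ b) :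
    Φ a * (b / a) ^ l ≤ Φ b ∧ Φ b ≤ Φ a * (b / a) ^ m := by
  have hb : 0 < b := lt_of_lt_of_le ha hab
  have hΦa : 0 < Φ a := young_phi_pos hY hl0 hPhi1 ha
  have hΦb : 0 < Φ b := young_phi_pos hY hl0 hPhi1 hb
  set A := Real.log a with hA
  set B := Real.log b with hB
  have hAB : A ≤ B := Real.log_le_log ha hab
  set F : ℝ → ℝ := fun s => Real.log (Φ (Real.exp s)) with hF
  set ψ : ℝ → ℝ := fun s => Real.exp s * φ (Real.exp s) / Φ (Real.exp s) with hψ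
  have hFd : ∀ s ∈ Set.Ico A B, HasDerivWithinAt F (ψ s) (Set.Ici s) s := by
    intro s _
    have he : (0:ℝ) < Real.exp s := Real.exp_pos s
    have h1 : HasDerivWithinAt (fun s => Φ (Real.exp s)) (φ (Real.exp s) * Real.exp s)
        (Set.Ici s) s := by
      exact (young_hasDeriv hY he.le).comp s (Real.hasDerivAt_exp s).hasDerivWithinAt
        (fun x hx => Real.exp_le_exp.2 hx)
    have h2 : HasDerivWithinAt F ((Φ (Real.exp s))⁻¹ * (φ (Real.exp s) * Real.exp s))
        (Set.Ici s) s := by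
      have := (Real.hasDerivAt_log (ne_of_gt (young_phi_pos hY hl0 hPhi1 he))).comp_hasDerivWithinAt s h1
      exact this
    convert h2 using 1
    rw [hψ]
    field_simp
  have hFc : ContinuousOn F (Set.Icc A B) := by
    intro s hs
    have he : (0:ℝ) < Real.exp s := Real.exp_pos s
    have hmap : Set.MapsTo Real.exp (Set.Icc A B) (Set.Icc 0 b) := by
      intro x hx
      exact ⟨(Real.exp_pos x).le, by
        rw [← Real.exp_log hb]; exact Real.exp_le_exp.2 hx.2⟩
    have h1 : ContinuousWithinAt (fun s => Φ (Real.exp s)) (Set.Icc A B) s :=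
      ((young_contOn hY hb.le).continuousWithinAt (hmap hs)).comp
        Real.continuous_exp.continuousWithinAt hmap
    exact h1.log (ne_of_gt (young_phi_pos hY hl0 hPhi1 he))
  have hψb : ∀ s ∈ Set.Ico A B, l ≤ ψ s ∧ ψ s ≤ m := fun s _ => hPhi1 (Real.exp s) (Real.exp_pos s)
  -- upper bound: F B - F A ≤ m * (B - A)
  have key2 : |(F B - l * B) - (F A - l * A)| ≤ (m - l) * (B - A) := by
    have := norm_image_sub_le_of_norm_deriv_right_le_segment
      (f := fun s => F s - l * s) (f' := fun s => ψ s - l) (C := m - l)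
      (hFc.sub ((continuousOn_const (c := l)).mul continuousOn_id))
      (fun s hs => (hFd s hs).sub (by
        simpa using ((hasDerivAt_id s).const_mul l).hasDerivWithinAt))
      (fun s hs => by
        obtain ⟨h1, h2⟩ := hψb s hs
        rw [Real.norm_eq_abs, abs_le]
        constructor <;> · linarith)
      B (Set.right_mem_Icc.2 hAB)
    simpa [Real.norm_eq_abs] using this
  have key1 : |(m * B - F B) - (m * A - F A)| ≤ (m - l) * (B - A) := by
    have := norm_image_sub_le_of_norm_deriv_right_le_segment
      (f := fun s => m * s - F s) (f' := fun s => m - ψ s) (C := m - l)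
      (((continuousOn_const (c := m)).mul continuousOn_id).sub hFc)
      (fun s hs => (by
        simpa using ((hasDerivAt_id s).const_mul m).hasDerivWithinAt : HasDerivWithinAt
          (fun x => m * x) m (Set.Ici s) s).sub (hFd s hs))
      (fun s hs => by
        obtain ⟨h1, h2⟩ := hψb s hs
        rw [Real.norm_eq_abs, abs_le]
        constructor <;> · linarith)
      B (Set.right_mem_Icc.2 hAB)
    simpa [Real.norm_eq_abs] using this
  rw [abs_le] at key1 key2
  have hFB : F B = Real.log (Φ b) := by simp only [hF, hB]; rw [Real.exp_log hb]
  have hFA : F A = Real.log (Φ a) := by simp only [hF, hA]; rw [Real.exp_log ha]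
  have hX1 : l * (B - A) ≤ Real.log (Φ b) - Real.log (Φ a) := by
    rw [← hFA, ← hFB]; linarith [key1.2]
  have hX2 : Real.log (Φ b) - Real.log (Φ a) ≤ m * (B - A) := by
    rw [← hFA, ← hFB]; linarith [key2.2]
  have hba : (0:ℝ) < b / a := div_pos hb ha
  constructor
  · have hlog : Real.log (Φ a * (b / a) ^ l) ≤ Real.log (Φ b) := by
      rw [Real.log_mul (ne_of_gt hΦa) (ne_of_gt (Real.rpow_pos_of_pos hba l)),
        Real.log_rpow hba, Real.log_div (ne_of_gt hb) (ne_of_gt ha)]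
      rw [hA, hB] at hX1; linarith
    have := Real.exp_le_exp.2 hlog
    rwa [Real.exp_log (mul_pos hΦa (Real.rpow_pos_of_pos hba l)), Real.exp_log hΦb] at this
  · have hlog : Real.log (Φ b) ≤ Real.log (Φ a * (b / a) ^ m) := by
      rw [Real.log_mul (ne_of_gt hΦa) (ne_of_gt (Real.rpow_pos_of_pos hba m)),
        Real.log_rpow hba, Real.log_div (ne_of_gt hb) (ne_of_gt ha)]
      rw [hA, hB] at hX2; linarith
    have := Real.exp_le_exp.2 hlog
    rwa [Real.exp_log hΦb, Real.exp_log (mul_pos hΦa (Real.rpow_pos_of_pos hba m))] at this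

lemma young_zero {Φ φ : ℝ → ℝ} (hY : IsYoungPair Φ φ) : Φ 0 = 0 := by
  rw [hY.integral_eq 0 le_rfl, intervalIntegral.integral_same]

lemma young_scale {Φ φ : ℝ → ℝ} {l m : ℝ} (hY : IsYoungPair Φ φ) (hl0 : 0 < l) (hlm : l ≤ m)
    (hPhi1 : ∀ t > 0, l ≤ t * φ t / Φ t ∧ t * φ t / Φ t ≤ m)
    {ξ : ℝ} (hξ : 0 < ξ) {t : ℝ} (ht : 0 ≤ t) :
    min (ξ ^ l) (ξ ^ m) * Φ (t / ξ) ≤ Φ t ∧ Φ t ≤ max (ξ ^ l) (ξ ^ m) * Φ (t / ξ) := by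
  rcases eq_or_lt_of_le ht with h0 | ht
  · rw [← h0, zero_div, young_zero hY, mul_zero]
    simp
  have htξ : 0 < t / ξ := div_pos ht hξ
  have hΦtξ : 0 < Φ (t / ξ) := young_phi_pos hY hl0 hPhi1 htξ
  rcases le_total 1 ξ with hξ1 | hξ1
  · -- ξ ≥ 1 : a = t/ξ, b = t
    have hab : t / ξ ≤ t := by
      rw [div_le_iff₀ hξ]; nlinarith
    have hr := young_ratio hY hl0 hlm hPhi1 htξ hab
    have hba : t / (t / ξ) = ξ := by field_simp
    rw [hba] at hr
    have hmono : ξ ^ l ≤ ξ ^ m := Real.rpow_le_rpow_of_exponent_le hξ1 hlm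
    rw [min_eq_left hmono, max_eq_right hmono]
    constructor
    · calc ξ ^ l * Φ (t / ξ) = Φ (t / ξ) * ξ ^ l := by ring
        _ ≤ Φ t := hr.1
    · calc Φ t ≤ Φ (t / ξ) * ξ ^ m := hr.2
        _ = ξ ^ m * Φ (t / ξ) := by ring
  · -- ξ ≤ 1 : a = t, b = t/ξ
    have hab : t ≤ t / ξ := by
      rw [le_div_iff₀ hξ]; nlinarith
    have hr := young_ratio hY hl0 hlm hPhi1 ht hab
    have hba : t / ξ / t = ξ⁻¹ := by field_simp
    rw [hba] at hr
    have hΦt : 0 < Φ t := young_phi_pos hY hl0 hPhi1 ht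
    have hil : ξ⁻¹ ^ l = (ξ ^ l)⁻¹ := Real.inv_rpow hξ.le l
    have him : ξ⁻¹ ^ m = (ξ ^ m)⁻¹ := Real.inv_rpow hξ.le m
    have hξl : 0 < ξ ^ l := Real.rpow_pos_of_pos hξ l
    have hξm : 0 < ξ ^ m := Real.rpow_pos_of_pos hξ m
    have hmono : ξ ^ m ≤ ξ ^ l := Real.rpow_le_rpow_of_exponent_ge hξ hξ1 hlm
    rw [min_eq_right hmono, max_eq_left hmono]
    constructor
    · -- ξ^m * Φ(t/ξ) ≤ Φ t  from  Φ(t/ξ) ≤ Φ t * (ξ^m)⁻¹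
      have h2 := hr.2
      rw [him] at h2
      calc ξ ^ m * Φ (t / ξ) ≤ ξ ^ m * (Φ t * (ξ ^ m)⁻¹) :=
            mul_le_mul_of_nonneg_left h2 hξm.le
        _ = Φ t := by field_simp
    · -- Φ t ≤ ξ^l * Φ(t/ξ)  from  Φ t * (ξ^l)⁻¹ ≤ Φ(t/ξ)
      have h1 := hr.1
      rw [hil] at h1
      have := mul_le_mul_of_nonneg_left h1 hξl.le
      calc Φ t = ξ ^ l * (Φ t * (ξ ^ l)⁻¹) := by field_simp
        _ ≤ ξ ^ l * Φ (t / ξ) := this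

/-- If `Φ` satisfies `(Φ₁)` with constants `l, m` and `N` is the weighted Luxemburg norm
of `u`, then `min(N^l, N^m) ≤ ∫ ω·Φ(|u|) dμ ≤ max(N^l, N^m)`. -/
theorem luxemburg_modular_bounds {Ω : Type*} [MeasurableSpace Ω] (μ : Measure Ω)
    (ω : Ω → ℝ) (hω : Measurable ω) (hω0 : ∀ x, 0 ≤ ω x)
    (Φ φ : ℝ → ℝ) (hY : IsYoungPair Φ φ) (l m : ℝ)
    (hl : 1 < l) (hlm : l ≤ m)
    (hPhi1 : ∀ t > 0, l ≤ t * φ t / Φ t ∧ t * φ t / Φ t ≤ m)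
    (u : Ω → ℝ) (hu : Measurable u)
    (S : Set ℝ)
    (hS : S = {ξ : ℝ | 0 < ξ ∧
      ∫⁻ x, ENNReal.ofReal (ω x * Φ (|u x| / ξ)) ∂μ ≤ 1})
    (hne : S.Nonempty) (N : ℝ) (hN : N = sInf S) :
    ENNReal.ofReal (min (N ^ l) (N ^ m)) ≤
        ∫⁻ x, ENNReal.ofReal (ω x * Φ (|u x|)) ∂μ ∧
    ∫⁻ x, ENNReal.ofReal (ω x * Φ (|u x|)) ∂μ ≤
        ENNReal.ofReal (max (N ^ l) (N ^ m)) := by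
  have hl0 : 0 < l := lt_trans one_pos hl
  have hm0 : 0 < m := lt_of_lt_of_le hl0 hlm
  set I := ∫⁻ x, ENNReal.ofReal (ω x * Φ (|u x|)) ∂μ with hI
  have hSpos : ∀ ξ ∈ S, 0 < ξ := fun ξ hξ => by rw [hS] at hξ; exact hξ.1
  have hbdd : BddBelow S := ⟨0, fun ξ hξ => (hSpos ξ hξ).le⟩
  have hN0 : 0 ≤ N := hN ▸ le_csInf hne (fun ξ hξ => (hSpos ξ hξ).le)
  -- upper estimate for each ξ ∈ S
  have hup : ∀ ξ ∈ S, I ≤ ENNReal.ofReal (max (ξ ^ l) (ξ ^ m)) := by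
    intro ξ hξ
    rw [hS] at hξ; obtain ⟨hξ0, hint⟩ := hξ
    have hC : (0:ℝ) ≤ max (ξ ^ l) (ξ ^ m) :=
      le_trans (Real.rpow_nonneg hξ0.le l) (le_max_left _ _)
    have hpt : ∀ x, ENNReal.ofReal (ω x * Φ (|u x|)) ≤
        ENNReal.ofReal (max (ξ ^ l) (ξ ^ m)) * ENNReal.ofReal (ω x * Φ (|u x| / ξ)) := by
      intro x
      rw [← ENNReal.ofReal_mul hC]
      apply ENNReal.ofReal_le_ofReal
      have hs := (young_scale hY hl0 hlm hPhi1 hξ0 (abs_nonneg (u x))).2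
      calc ω x * Φ (|u x|) ≤ ω x * (max (ξ ^ l) (ξ ^ m) * Φ (|u x| / ξ)) :=
            mul_le_mul_of_nonneg_left hs (hω0 x)
        _ = max (ξ ^ l) (ξ ^ m) * (ω x * Φ (|u x| / ξ)) := by ring
    calc I ≤ ∫⁻ x, ENNReal.ofReal (max (ξ ^ l) (ξ ^ m)) *
            ENNReal.ofReal (ω x * Φ (|u x| / ξ)) ∂μ := lintegral_mono hpt
      _ = ENNReal.ofReal (max (ξ ^ l) (ξ ^ m)) *
            ∫⁻ x, ENNReal.ofReal (ω x * Φ (|u x| / ξ)) ∂μ :=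
          lintegral_const_mul' _ _ ENNReal.ofReal_ne_top
      _ ≤ ENNReal.ofReal (max (ξ ^ l) (ξ ^ m)) * 1 := mul_le_mul_right hint _
      _ = ENNReal.ofReal (max (ξ ^ l) (ξ ^ m)) := mul_one _
  -- lower estimate for each positive ξ ∉ S
  have hlow : ∀ ξ, 0 < ξ → ξ ∉ S → ENNReal.ofReal (min (ξ ^ l) (ξ ^ m)) ≤ I := by
    intro ξ hξ0 hξS
    have hJ : 1 ≤ ∫⁻ x, ENNReal.ofReal (ω x * Φ (|u x| / ξ)) ∂μ := by
      by_contra h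
      push_neg at h
      exact hξS (by rw [hS]; exact ⟨hξ0, h.le⟩)
    have hC : (0:ℝ) ≤ min (ξ ^ l) (ξ ^ m) :=
      le_min (Real.rpow_nonneg hξ0.le l) (Real.rpow_nonneg hξ0.le m)
    have hpt : ∀ x, ENNReal.ofReal (min (ξ ^ l) (ξ ^ m)) *
        ENNReal.ofReal (ω x * Φ (|u x| / ξ)) ≤ ENNReal.ofReal (ω x * Φ (|u x|)) := by
      intro x
      rw [← ENNReal.ofReal_mul hC]
      apply ENNReal.ofReal_le_ofReal
      have hs := (young_scale hY hl0 hlm hPhi1 hξ0 (abs_nonneg (u x))).1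
      calc min (ξ ^ l) (ξ ^ m) * (ω x * Φ (|u x| / ξ))
          = ω x * (min (ξ ^ l) (ξ ^ m) * Φ (|u x| / ξ)) := by ring
        _ ≤ ω x * Φ (|u x|) := mul_le_mul_of_nonneg_left hs (hω0 x)
    calc ENNReal.ofReal (min (ξ ^ l) (ξ ^ m))
        = ENNReal.ofReal (min (ξ ^ l) (ξ ^ m)) * 1 := (mul_one _).symm
      _ ≤ ENNReal.ofReal (min (ξ ^ l) (ξ ^ m)) *
            ∫⁻ x, ENNReal.ofReal (ω x * Φ (|u x| / ξ)) ∂μ := mul_le_mul_right hJ _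
      _ = ∫⁻ x, ENNReal.ofReal (min (ξ ^ l) (ξ ^ m)) *
            ENNReal.ofReal (ω x * Φ (|u x| / ξ)) ∂μ :=
          (lintegral_const_mul' _ _ ENNReal.ofReal_ne_top).symm
      _ ≤ I := lintegral_mono hpt
  have hIne : I ≠ ⊤ := by
    obtain ⟨ξ₀, hξ₀⟩ := hne
    exact ne_top_of_le_ne_top ENNReal.ofReal_ne_top (hup ξ₀ hξ₀)
  set r := I.toReal with hr
  have hIr : I = ENNReal.ofReal r := (ENNReal.ofReal_toReal hIne).symm
  constructor
  · -- lower bound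
    by_contra hcon
    push_neg at hcon
    have hminpos : 0 < min (N ^ l) (N ^ m) :=
      ENNReal.ofReal_pos.1 (lt_of_le_of_lt (zero_le : 0 ≤ I) hcon)
    have hNpos : 0 < N := by
      rcases eq_or_lt_of_le hN0 with h | h
      · exfalso
        rw [← h, Real.zero_rpow (ne_of_gt hl0), Real.zero_rpow (ne_of_gt hm0)] at hminpos
        simp at hminpos
      · exact h
    have hrmin : r < min (N ^ l) (N ^ m) := by
      rw [hIr] at hcon
      exact (ENNReal.ofReal_lt_ofReal_iff hminpos).1 hcon
    have hg : ContinuousAt (fun x : ℝ => min (x ^ l) (x ^ m)) N :=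
      ContinuousAt.inf (Real.continuousAt_rpow_const N l (Or.inl (ne_of_gt hNpos)))
        (Real.continuousAt_rpow_const N m (Or.inl (ne_of_gt hNpos)))
    rw [Metric.continuousAt_iff] at hg
    obtain ⟨δ, hδ0, hδ⟩ := hg (min (N ^ l) (N ^ m) - r) (by linarith)
    set ξ := N - min (δ / 2) (N / 2) with hξdef
    have hmin2 : 0 < min (δ / 2) (N / 2) := lt_min (by linarith) (by linarith)
    have hξ0 : 0 < ξ := by
      have := min_le_right (δ / 2) (N / 2); rw [hξdef]; linarith
    have hξN : ξ < N := by rw [hξdef]; linarith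
    have hdist : dist ξ N < δ := by
      rw [Real.dist_eq, hξdef]
      have h1 : min (δ / 2) (N / 2) ≤ δ / 2 := min_le_left _ _
      rw [abs_of_nonpos (by linarith)]
      linarith
    have hgt := hδ hdist
    rw [Real.dist_eq] at hgt
    have habs := abs_lt.1 hgt
    have hrξ : r < min (ξ ^ l) (ξ ^ m) := by
      have := habs.1
      linarith
    have hξnotS : ξ ∉ S := fun hmem => absurd (hN ▸ csInf_le hbdd hmem) (not_le.2 hξN)
    have hle := hlow ξ hξ0 hξnotS
    rw [hIr] at hle
    have : min (ξ ^ l) (ξ ^ m) ≤ r :=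
      (ENNReal.ofReal_le_ofReal_iff ENNReal.toReal_nonneg).1 hle
    linarith
  · -- upper bound
    by_contra hcon
    push_neg at hcon
    have hmax0 : (0:ℝ) ≤ max (N ^ l) (N ^ m) :=
      le_trans (Real.rpow_nonneg hN0 l) (le_max_left _ _)
    have hrmax : max (N ^ l) (N ^ m) < r := by
      rw [hIr] at hcon
      exact (ENNReal.ofReal_lt_ofReal_iff_of_nonneg hmax0).1 hcon
    have hf : ContinuousAt (fun x : ℝ => max (x ^ l) (x ^ m)) N :=
      ContinuousAt.sup (Real.continuousAt_rpow_const N l (Or.inr hl0.le))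
        (Real.continuousAt_rpow_const N m (Or.inr hm0.le))
    rw [Metric.continuousAt_iff] at hf
    obtain ⟨δ, hδ0, hδ⟩ := hf (r - max (N ^ l) (N ^ m)) (by linarith)
    have hsInflt : sInf S < N + δ := by rw [← hN]; linarith
    obtain ⟨ξ, hξS, hξlt⟩ := (csInf_lt_iff hbdd hne).1 hsInflt
    have hξge : N ≤ ξ := hN ▸ csInf_le hbdd hξS
    have hdist : dist ξ N < δ := by
      rw [Real.dist_eq, abs_of_nonneg (by linarith)]; linarith
    have hgt := hδ hdist
    rw [Real.dist_eq] at hgt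
    have habs := abs_lt.1 hgt
    have hfξ : max (ξ ^ l) (ξ ^ m) < r := by
      have := habs.2
      linarith
    have h1 := hup ξ hξS
    rw [hIr] at h1
    have hmaxξ0 : (0:ℝ) ≤ max (ξ ^ l) (ξ ^ m) :=
      le_trans (Real.rpow_nonneg (hSpos ξ hξS).le l) (le_max_left _ _)
    have h2 : r ≤ max (ξ ^ l) (ξ ^ m) :=
      (ENNReal.ofReal_le_ofReal_iff hmaxξ0).1 h1
    linarith
end

section
/- Let Φ be a Young function satisfying conditions (Φ₁) and (Φ₂), with density φ, and let N ≥ 1. Then for all nonzero vectors a, b ∈ ℝᴺ (with the Euclidean norm ‖·‖ and inner product ·) one has (1/2)·(φ(‖a‖)·a/‖a‖ − φ(‖b‖)·b/‖b‖)·(a − b) ≥ Φ(‖a‖) + Φ(‖b‖) − 2·Φ(‖(a+b)/2‖) ≥ 2·Φ(‖(a−b)/2‖). -/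
open Filter Set MeasureTheory

open RealInnerProductSpace

/-- `φ r` is a subgradient of `Φ` at `r` on `[0,∞)`. -/
lemma young_subgrad (Φ φ : ℝ → ℝ) (hY : IsYoungPair Φ φ) {r s : ℝ}
    (hr : 0 ≤ r) (hs : 0 ≤ s) : φ r * (s - r) ≤ Φ s - Φ r := by
  have hint : ∀ x y : ℝ, 0 ≤ x → 0 ≤ y → IntervalIntegrable φ volume x y := by
    intro x y hx hy
    refine (hY.mono.mono ?_).intervalIntegrable
    intro t ht
    rw [Set.mem_uIcc] at ht
    rcases ht with h | h
    · exact le_trans hx h.1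
    · exact le_trans hy h.1
  have key : Φ s - Φ r = ∫ t in r..s, φ t := by
    rw [hY.integral_eq s hs, hY.integral_eq r hr]
    exact intervalIntegral.integral_interval_sub_left (hint 0 s le_rfl hs) (hint 0 r le_rfl hr)
  rcases le_total r s with h | h
  · have hmono : ∀ x ∈ Set.Icc r s, (fun _ : ℝ => φ r) x ≤ φ x := by
      intro x hx
      exact hY.mono hr (le_trans hr hx.1) hx.1
    have := intervalIntegral.integral_mono_on h
      (intervalIntegrable_const) (hint r s hr hs) hmono
    rw [intervalIntegral.integral_const] at this
    rw [key]
    simpa [smul_eq_mul, mul_comm] using this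
  · have hmono : ∀ x ∈ Set.Icc s r, φ x ≤ (fun _ : ℝ => φ r) x := by
      intro x hx
      exact hY.mono (le_trans hs hx.1) hr hx.2
    have := intervalIntegral.integral_mono_on h
      (hint s r hs hr) (intervalIntegrable_const) hmono
    rw [intervalIntegral.integral_const] at this
    have hsym : ∫ t in r..s, φ t = - ∫ t in s..r, φ t := intervalIntegral.integral_symm s r
    rw [key, hsym]
    simp only [smul_eq_mul] at this
    nlinarith
  
/-- Vector-valued subgradient inequality for `x ↦ Φ ‖x‖`. -/
lemma vec_subgrad (Φ φ : ℝ → ℝ) (hY : IsYoungPair Φ φ) {N : ℕ}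
    (a c : EuclideanSpace ℝ (Fin N)) (ha : a ≠ 0) :
    Φ ‖a‖ + (φ ‖a‖ / ‖a‖) * ⟪a, c - a⟫ ≤ Φ ‖c‖ := by
  have hna : (0:ℝ) < ‖a‖ := norm_pos_iff.mpr ha
  have hφ : 0 < φ ‖a‖ := hY.pos _ hna
  have h1 : ⟪a, c - a⟫ = ⟪a, c⟫ - ‖a‖ * ‖a‖ := by
    rw [inner_sub_right, real_inner_self_eq_norm_mul_norm]
  have h2 : ⟪a, c⟫ ≤ ‖a‖ * ‖c‖ := real_inner_le_norm a c
  have h3 : φ ‖a‖ * (‖c‖ - ‖a‖) ≤ Φ ‖c‖ - Φ ‖a‖ :=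
    young_subgrad Φ φ hY (le_of_lt hna) (norm_nonneg c)
  have h4 : (φ ‖a‖ / ‖a‖) * ⟪a, c - a⟫ ≤ φ ‖a‖ * (‖c‖ - ‖a‖) := by
    rw [h1]
    have : (φ ‖a‖ / ‖a‖) * (⟪a, c⟫ - ‖a‖ * ‖a‖) ≤ (φ ‖a‖ / ‖a‖) * (‖a‖ * ‖c‖ - ‖a‖ * ‖a‖) := by
      apply mul_le_mul_of_nonneg_left (by linarith) (le_of_lt (div_pos hφ hna))
    calc (φ ‖a‖ / ‖a‖) * (⟪a, c⟫ - ‖a‖ * ‖a‖) ≤ (φ ‖a‖ / ‖a‖) * (‖a‖ * ‖c‖ - ‖a‖ * ‖a‖) := this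
      _ = φ ‖a‖ * (‖c‖ - ‖a‖) := by field_simp
  linarith

/-- Superadditivity of a convex function vanishing at `0`. -/
lemma convex_superadd (Ψ : ℝ → ℝ) (hΨ : ConvexOn ℝ (Set.Ici 0) Ψ) (h0 : Ψ 0 = 0)
    {u v : ℝ} (hu : 0 ≤ u) (hv : 0 ≤ v) : Ψ u + Ψ v ≤ Ψ (u + v) := by
  rcases eq_or_lt_of_le (add_nonneg hu hv) with h | h
  · have hu0 : u = 0 := by linarith
    have hv0 : v = 0 := by linarith
    simp [hu0, hv0, h0]
  · have h0m : (0:ℝ) ∈ Set.Ici (0:ℝ) := Set.self_mem_Ici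
    have hm : u + v ∈ Set.Ici (0:ℝ) := le_of_lt h
    have e1 : Ψ u ≤ (v/(u+v)) * Ψ 0 + (u/(u+v)) * Ψ (u+v) := by
      have := hΨ.2 h0m hm (div_nonneg hv (le_of_lt h)) (div_nonneg hu (le_of_lt h))
        (by field_simp; try ring)
      have harg : (v/(u+v)) • (0:ℝ) + (u/(u+v)) • (u+v) = u := by
        simp only [smul_eq_mul, mul_zero, zero_add]
        field_simp
      rw [harg] at this
      simpa [smul_eq_mul] using this
    have e2 : Ψ v ≤ (u/(u+v)) * Ψ 0 + (v/(u+v)) * Ψ (u+v) := by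
      have := hΨ.2 h0m hm (div_nonneg hu (le_of_lt h)) (div_nonneg hv (le_of_lt h))
        (by field_simp; try ring)
      have harg : (u/(u+v)) • (0:ℝ) + (v/(u+v)) • (u+v) = v := by
        simp only [smul_eq_mul, mul_zero, zero_add]
        field_simp
      rw [harg] at this
      simpa [smul_eq_mul] using this
    have hsum : (u/(u+v)) + (v/(u+v)) = 1 := by field_simp
    rw [h0] at e1 e2
    have hmul : (u/(u+v)) * Ψ (u+v) + (v/(u+v)) * Ψ (u+v) = Ψ (u+v) := by
      rw [← add_mul, hsum, one_mul]
    linarith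

/-- Monotonicity-convexity inequality for the weighted `φ`-Laplacian integrand: for
nonzero `a, b ∈ ℝᴺ`,
`(1/2)·(φ(‖a‖)a/‖a‖ − φ(‖b‖)b/‖b‖)·(a − b) ≥ Φ(‖a‖) + Φ(‖b‖) − 2Φ(‖(a+b)/2‖) ≥ 2Φ(‖(a−b)/2‖)`. -/
theorem phi_laplacian_monotone (Φ φ : ℝ → ℝ) (hY : IsYoungPair Φ φ) (l m : ℝ)
    (hl : 1 < l) (hlm : l ≤ m)
    (hPhi1 : ∀ t > 0, l ≤ t * φ t / Φ t ∧ t * φ t / Φ t ≤ m)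
    (hPhi2 : ConvexOn ℝ (Set.Ici 0) (fun t => Φ (Real.sqrt t)))
    (N : ℕ) (hN : 1 ≤ N)
    (a b : EuclideanSpace ℝ (Fin N)) (ha : a ≠ 0) (hb : b ≠ 0) :
    Φ ‖a‖ + Φ ‖b‖ - 2 * Φ ‖(1/2 : ℝ) • (a + b)‖ ≤
      (1/2 : ℝ) * ⟪(φ ‖a‖ / ‖a‖) • a - (φ ‖b‖ / ‖b‖) • b, a - b⟫ ∧
    2 * Φ ‖(1/2 : ℝ) • (a - b)‖ ≤
      Φ ‖a‖ + Φ ‖b‖ - 2 * Φ ‖(1/2 : ℝ) • (a + b)‖ := by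
  have hΦ0 : Φ 0 = 0 := by
    have := hY.integral_eq 0 le_rfl
    simpa using this
  constructor
  · -- first inequality, via subgradient inequality applied at the midpoint
    set c : EuclideanSpace ℝ (Fin N) := (1/2 : ℝ) • (a + b) with hc
    have h1 := vec_subgrad Φ φ hY a c ha
    have h2 := vec_subgrad Φ φ hY b c hb
    have e1 : c - a = (1/2 : ℝ) • (b - a) := by rw [hc]; module
    have e2 : c - b = (1/2 : ℝ) • (a - b) := by rw [hc]; module
    rw [e1] at h1
    rw [e2] at h2
    simp only [real_inner_smul_right, inner_sub_right, inner_sub_left, real_inner_smul_left] at h1 h2 ⊢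
    linarith
  · -- second inequality: Clarkson-type, from convexity of Ψ = Φ ∘ √ and parallelogram law
    set Ψ : ℝ → ℝ := fun t => Φ (Real.sqrt t) with hΨdef
    have hΨ0 : Ψ 0 = 0 := by simp [hΨdef, hΦ0]
    have hΨval : ∀ x : EuclideanSpace ℝ (Fin N), Ψ (‖x‖ * ‖x‖) = Φ ‖x‖ := by
      intro x
      simp only [hΨdef]
      rw [show ‖x‖ * ‖x‖ = ‖x‖^2 by ring, Real.sqrt_sq (norm_nonneg x)]
    have hpar : ‖a + b‖ * ‖a + b‖ + ‖a - b‖ * ‖a - b‖ = 2 * (‖a‖ * ‖a‖ + ‖b‖ * ‖b‖) :=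
      by simpa only [sq] using parallelogram_law_with_norm ℝ a b
    have hns : ∀ x : EuclideanSpace ℝ (Fin N), ‖(1/2 : ℝ) • x‖ = (1/2) * ‖x‖ := by
      intro x
      rw [norm_smul]
      norm_num
    -- u, v : squared norms of midpoints
    set u := ‖(1/2 : ℝ) • (a + b)‖ * ‖(1/2 : ℝ) • (a + b)‖ with hu
    set v := ‖(1/2 : ℝ) • (a - b)‖ * ‖(1/2 : ℝ) • (a - b)‖ with hv
    have huv : u + v = (‖a‖ * ‖a‖ + ‖b‖ * ‖b‖) / 2 := by
      rw [hu, hv, hns (a+b), hns (a-b)]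
      nlinarith [hpar]
    have hu0 : 0 ≤ u := mul_self_nonneg _
    have hv0 : 0 ≤ v := mul_self_nonneg _
    have hsup : Ψ u + Ψ v ≤ Ψ (u + v) := convex_superadd Ψ hPhi2 hΨ0 hu0 hv0
    have hmid : Ψ ((‖a‖ * ‖a‖ + ‖b‖ * ‖b‖) / 2) ≤ (Ψ (‖a‖*‖a‖) + Ψ (‖b‖*‖b‖)) / 2 := by
      have := hPhi2.2 (mul_self_nonneg ‖a‖ : (‖a‖*‖a‖) ∈ Set.Ici (0:ℝ))
        (mul_self_nonneg ‖b‖ : (‖b‖*‖b‖) ∈ Set.Ici (0:ℝ))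
        (by norm_num : (0:ℝ) ≤ 1/2) (by norm_num : (0:ℝ) ≤ 1/2) (by norm_num)
      simp only [smul_eq_mul] at this
      calc Ψ ((‖a‖ * ‖a‖ + ‖b‖ * ‖b‖) / 2) = Ψ (1/2 * (‖a‖*‖a‖) + 1/2 * (‖b‖*‖b‖)) := by ring_nf
        _ ≤ 1/2 * Ψ (‖a‖*‖a‖) + 1/2 * Ψ (‖b‖*‖b‖) := this
        _ = (Ψ (‖a‖*‖a‖) + Ψ (‖b‖*‖b‖)) / 2 := by ring
    have hPa : Ψ (‖a‖*‖a‖) = Φ ‖a‖ := hΨval a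
    have hPb : Ψ (‖b‖*‖b‖) = Φ ‖b‖ := hΨval b
    have hPu : Ψ u = Φ ‖(1/2 : ℝ) • (a + b)‖ := hΨval _
    have hPv : Ψ v = Φ ‖(1/2 : ℝ) • (a - b)‖ := hΨval _
    rw [huv] at hsup
    linarith
end

section
/- Let (Ω, μ) be a measure space, ω₁ : Ω → [0,∞) measurable, and ψ : [0,∞) → [0,∞) continuous, nondecreasing, with ψ(0) = 0 and ψ(s) > 0 for s > 0; set Ψ(t) = ∫₀ᵗ ψ(s) ds. Let u, v : Ω → ℝ be measurable functions such that ∫_Ω ω₁·Ψ(4|u| + 2|v|) dμ < ∞, ∫_Ω ω₁·ψ(|u|)·|u| dμ > 0 and ∫_Ω ω₁·ψ(|u|)·|v| dμ > 0. Then there exist ε₀ > 0 and a continuously differentiable function δ : (−ε₀, ε₀) → ℝ such that δ(0) = 0, δ′(0) = (∫_Ω ω₁·ψ(|u|)·|u| dμ)/(∫_Ω ω₁·ψ(|u|)·|v| dμ), and ∫_Ω ω₁·Ψ(|(1−ε)·|u| + δ(ε)·|v||) dμ = ∫_Ω ω₁·Ψ(|u|) dμ for every ε ∈ (−ε₀,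 ε₀). -/
open Filter Set MeasureTheory Topology

set_option maxHeartbeats 1600000 in
/-- Implicit-function lemma on the level set of the modular `J`. -/
theorem implicit_delta {Ω : Type*} [MeasurableSpace Ω] (μ : Measure Ω)
    (ω₁ : Ω → ℝ) (hω₁ : Measurable ω₁) (hω₁0 : ∀ x, 0 ≤ ω₁ x)
    (ψ : ℝ → ℝ) (hψc : ContinuousOn ψ (Set.Ici 0))
    (hψmono : MonotoneOn ψ (Set.Ici 0)) (hψ0 : ψ 0 = 0)
    (hψpos : ∀ s > (0:ℝ), 0 < ψ s)
    (Ψ : ℝ → ℝ) (hΨ : ∀ t, Ψ t = ∫ s in (0:ℝ)..t, ψ s)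
    (u v : Ω → ℝ) (hu : Measurable u) (hv : Measurable v)
    (hint : Integrable (fun x => ω₁ x * Ψ (4 * |u x| + 2 * |v x|)) μ)
    (hpos_u : 0 < ∫ x, ω₁ x * ψ (|u x|) * |u x| ∂μ)
    (hpos_v : 0 < ∫ x, ω₁ x * ψ (|u x|) * |v x| ∂μ) :
    ∃ ε₀ > (0:ℝ), ∃ δ : ℝ → ℝ,
      ContDiffOn ℝ 1 δ (Set.Ioo (-ε₀) ε₀) ∧ δ 0 = 0 ∧
      deriv δ 0 = (∫ x, ω₁ x * ψ (|u x|) * |u x| ∂μ) /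
          (∫ x, ω₁ x * ψ (|u x|) * |v x| ∂μ) ∧
      ∀ ε ∈ Set.Ioo (-ε₀) ε₀,
        (∫ x, ω₁ x * Ψ (abs ((1 - ε) * |u x| + δ ε * |v x|)) ∂μ) =
          ∫ x, ω₁ x * Ψ (|u x|) ∂μ := by
  classical
  -- ψ is nonnegative on `[0, ∞)`
  have hψnn : ∀ s : ℝ, 0 ≤ s → 0 ≤ ψ s := fun s hs => by
    have h := hψmono (mem_Ici.mpr le_rfl) (mem_Ici.mpr hs) hs
    rwa [hψ0] at h
  -- odd extension of ψ
  set ψt : ℝ → ℝ := fun r => ψ (max r 0) - ψ (max (-r) 0) with hψt_def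
  have cont_max : Continuous fun r : ℝ => ψ (max r 0) :=
    hψc.comp_continuous (continuous_id.max continuous_const)
      fun r => mem_Ici.mpr (le_max_right _ _)
  have hψtc : Continuous ψt := cont_max.sub (cont_max.comp continuous_neg)
  have hψt_eq : ∀ r : ℝ, 0 ≤ r → ψt r = ψ r := by
    intro r hr
    simp only [hψt_def]
    rw [max_eq_left hr, max_eq_right (neg_nonpos.mpr hr), hψ0, sub_zero]
  have hψt_odd : ∀ r : ℝ, ψt (-r) = -ψt r := by
    intro r; simp only [hψt_def, neg_neg]; ring
  have hψt_abs : ∀ r : ℝ, |ψt r| = ψ |r| := by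
    intro r
    rcases le_or_gt 0 r with hr | hr
    · rw [hψt_eq r hr, abs_of_nonneg (hψnn r hr), abs_of_nonneg hr]
    · have h1 : ψt r = -ψ (-r) := by
        have := hψt_odd (-r); rw [neg_neg] at this
        rw [this, hψt_eq (-r) (by linarith)]
      rw [h1, abs_neg, abs_of_nonneg (hψnn _ (by linarith)), abs_of_neg hr]
  -- the even primitive Φ
  set Φ : ℝ → ℝ := fun r => ∫ s in (0:ℝ)..r, ψt s with hΦ_def
  have hΦd : ∀ r : ℝ, HasDerivAt Φ (ψt r) r := fun r =>
    (hψtc.integral_hasStrictDerivAt 0 r).hasDerivAt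
  have hΦc : Continuous Φ :=
    continuous_iff_continuousAt.mpr fun r => (hΦd r).continuousAt
  have hΦeven : ∀ r : ℝ, Φ (-r) = Φ r := by
    intro r
    have h := intervalIntegral.integral_comp_neg (a := (0:ℝ)) (b := r) (f := ψt)
    have h1 : (∫ x in (0:ℝ)..r, ψt (-x)) = -(Φ r) := by
      simp only [hψt_odd]
      rw [intervalIntegral.integral_neg]
    rw [h1, neg_zero] at h
    have h2 : (∫ x in (-r)..(0:ℝ), ψt x) = -(Φ (-r)) := by
      rw [intervalIntegral.integral_symm]
    rw [h2] at h
    linarith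
  have hΦeqΨ : ∀ t : ℝ, 0 ≤ t → Φ t = Ψ t := by
    intro t ht
    rw [hΨ t]
    apply intervalIntegral.integral_congr
    intro s hs
    rw [uIcc_of_le ht] at hs
    exact hψt_eq s hs.1
  have hΦabs : ∀ r : ℝ, Φ r = Φ |r| := by
    intro r
    rcases le_or_gt 0 r with hr | hr
    · rw [abs_of_nonneg hr]
    · rw [abs_of_neg hr, ← hΦeven r]
  have hΦadj : ∀ s t : ℝ, Φ s + ∫ x in s..t, ψt x = Φ t := fun s t =>
    intervalIntegral.integral_add_adjacent_intervals
      (hψtc.intervalIntegrable _ _) (hψtc.intervalIntegrable _ _)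
  have hΦmono : ∀ s t : ℝ, 0 ≤ s → s ≤ t → Φ s ≤ Φ t := by
    intro s t hs hst
    have h1 := hΦadj s t
    have h2 : 0 ≤ ∫ x in s..t, ψt x := by
      apply intervalIntegral.integral_nonneg hst
      intro x hx
      rw [hψt_eq x (hs.trans hx.1)]
      exact hψnn x (hs.trans hx.1)
    linarith
  have hΦ0 : Φ 0 = 0 := intervalIntegral.integral_same
  have hΦnn : ∀ t : ℝ, 0 ≤ t → 0 ≤ Φ t := by
    intro t ht; rw [← hΦ0]; exact hΦmono 0 t le_rfl ht
  -- key Young-type inequality : ψ(a) * a ≤ Φ(2a)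
  have hkey : ∀ a : ℝ, 0 ≤ a → ψ a * a ≤ Φ (2 * a) := by
    intro a ha
    have h1 := hΦadj a (2 * a)
    have h2 : (∫ x in a..(2*a), ψ a) ≤ ∫ x in a..(2*a), ψt x := by
      apply intervalIntegral.integral_mono_on (by linarith)
        intervalIntegrable_const (hψtc.intervalIntegrable _ _)
      intro x hx
      rw [hψt_eq x (ha.trans hx.1)]
      exact hψmono (mem_Ici.mpr ha) (mem_Ici.mpr (ha.trans hx.1)) hx.1
    rw [intervalIntegral.integral_const, smul_eq_mul] at h2
    have h3 : (2 * a - a) * ψ a = ψ a * a := by ring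
    rw [h3] at h2
    have h4 := hΦnn a ha
    linarith
  -- abbreviations
  set fstL : ℝ × ℝ →L[ℝ] ℝ := ContinuousLinearMap.fst ℝ ℝ ℝ with hfstL_def
  set sndL : ℝ × ℝ →L[ℝ] ℝ := ContinuousLinearMap.snd ℝ ℝ ℝ with hsndL_def
  set L : Ω → (ℝ × ℝ →L[ℝ] ℝ) := fun x => (-|u x|) • fstL + |v x| • sndL with hL_def
  set gg : ℝ × ℝ → Ω → ℝ := fun p x => (1 - p.1) * |u x| + p.2 * |v x| with hgg_def
  set F' : ℝ × ℝ → Ω → (ℝ × ℝ →L[ℝ] ℝ) := fun p x => (ω₁ x * ψt (gg p x)) • L x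
    with hF'_def
  set Fn : ℝ × ℝ → ℝ := fun p => ∫ x, ω₁ x * Φ (gg p x) ∂μ with hFn_def
  have hL_norm : ∀ x, ‖L x‖ ≤ |u x| + |v x| := by
    intro x
    apply ContinuousLinearMap.opNorm_le_bound _ (by positivity)
    intro q
    have hq1 : |q.1| ≤ ‖q‖ := by
      have := norm_fst_le q; rwa [Real.norm_eq_abs] at this
    have hq2 : |q.2| ≤ ‖q‖ := by
      have := norm_snd_le q; rwa [Real.norm_eq_abs] at this
    simp only [hL_def, hfstL_def, hsndL_def, ContinuousLinearMap.add_apply,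
      ContinuousLinearMap.coe_smul', Pi.smul_apply, ContinuousLinearMap.coe_fst',
      ContinuousLinearMap.coe_snd', smul_eq_mul, Real.norm_eq_abs]
    calc |(-|u x|) * q.1 + (|v x|) * q.2| ≤ |(-|u x|) * q.1| + |(|v x|) * q.2| := abs_add_le _ _
      _ = |u x| * |q.1| + |v x| * |q.2| := by rw [abs_mul, abs_mul]; simp
      _ ≤ |u x| * ‖q‖ + |v x| * ‖q‖ := add_le_add
          (mul_le_mul_of_nonneg_left hq1 (abs_nonneg _))
          (mul_le_mul_of_nonneg_left hq2 (abs_nonneg _))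
      _ = (|u x| + |v x|) * ‖q‖ := by ring
  have hgL : ∀ (x : Ω) (p : ℝ × ℝ), HasFDerivAt (fun p => gg p x) (L x) p := by
    intro x p
    have h1 : HasFDerivAt (fun p : ℝ × ℝ => p.1) fstL p := hasFDerivAt_fst
    have h2 : HasFDerivAt (fun p : ℝ × ℝ => p.2) sndL p := hasFDerivAt_snd
    have h3 := (((hasFDerivAt_const (1:ℝ) p).sub h1).mul_const (|u x|)).add
      (h2.mul_const (|v x|))
    refine h3.congr_fderiv (ContinuousLinearMap.ext fun q => ?_).symm
    simp only [hL_def, hfstL_def, hsndL_def, ContinuousLinearMap.add_apply,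
      ContinuousLinearMap.coe_smul', Pi.smul_apply, ContinuousLinearMap.coe_fst',
      ContinuousLinearMap.coe_snd', smul_eq_mul, ContinuousLinearMap.sub_apply,
      ContinuousLinearMap.zero_apply]
    ring
  have habs_g : ∀ (x : Ω) (p : ℝ × ℝ), ‖p‖ < 1/2 →
      |gg p x| ≤ 2 * |u x| + |v x| := by
    intro x p hp
    have hq1 : |p.1| ≤ 1/2 := le_of_lt (lt_of_le_of_lt
      (by have := norm_fst_le p; rwa [Real.norm_eq_abs] at this) hp)
    have hq2 : |p.2| ≤ 1/2 := le_of_lt (lt_of_le_of_lt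
      (by have := norm_snd_le p; rwa [Real.norm_eq_abs] at this) hp)
    have h1 : |(1 - p.1) * (|u x|) + p.2 * (|v x|)| ≤
        |1 - p.1| * |u x| + |p.2| * |v x| := by
      calc |(1 - p.1) * (|u x|) + p.2 * (|v x|)| ≤
          |(1 - p.1) * (|u x|)| + |p.2 * (|v x|)| := abs_add_le _ _
        _ = |1 - p.1| * |u x| + |p.2| * |v x| := by rw [abs_mul, abs_mul]; simp
    have h2 : |1 - p.1| ≤ 2 := by
      have h3 := abs_sub (1:ℝ) p.1
      simp only [abs_one] at h3
      linarith
    have h4 := abs_nonneg (u x)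
    have h5 := abs_nonneg (v x)
    have h6 : |1 - p.1| * |u x| ≤ 2 * |u x| :=
      mul_le_mul_of_nonneg_right h2 h4
    have h7 : |p.2| * |v x| ≤ (1/2) * |v x| :=
      mul_le_mul_of_nonneg_right hq2 h5
    have h8 : gg p x = (1 - p.1) * (|u x|) + p.2 * (|v x|) := rfl
    rw [h8]
    linarith
  -- pointwise bounds
  have hΨΦ : ∀ x : Ω, Ψ (4 * |u x| + 2 * |v x|) = Φ (2 * (2 * |u x| + |v x|)) := by
    intro x
    have h0 : (0:ℝ) ≤ 4 * |u x| + 2 * |v x| := by positivity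
    rw [← hΦeqΨ _ h0]
    ring_nf
  have hmain : ∀ x : Ω, ∀ r : ℝ, |r| ≤ 2 * |u x| + |v x| →
      ψ (|r|) * (|u x| + |v x|) ≤ Ψ (4 * |u x| + 2 * |v x|) := by
    intro x r hr
    set a : ℝ := 2 * |u x| + |v x| with ha_def
    have ha : 0 ≤ a := by positivity
    have h1 : ψ (|r|) ≤ ψ a :=
      hψmono (mem_Ici.mpr (abs_nonneg r)) (mem_Ici.mpr ha) hr
    have h2 : |u x| + |v x| ≤ a := by
      simp only [ha_def]; have := abs_nonneg (u x); linarith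
    have h3 : ψ (|r|) * (|u x| + |v x|) ≤ ψ a * a :=
      mul_le_mul h1 h2 (by positivity) (hψnn a ha)
    have h4 := hkey a ha
    rw [hΨΦ x]
    linarith
  have hbound_ptwise : ∀ (x : Ω) (p : ℝ × ℝ), ‖p‖ < 1/2 →
      ‖F' p x‖ ≤ ω₁ x * Ψ (4 * |u x| + 2 * |v x|) := by
    intro x p hp
    have h1 : ‖F' p x‖ = |ω₁ x * ψt (gg p x)| * ‖L x‖ := by
      have h0 : F' p x = (ω₁ x * ψt (gg p x)) • L x := rfl
      rw [h0]
      rw [show |ω₁ x * ψt (gg p x)| = ‖ω₁ x * ψt (gg p x)‖ from rfl]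
      exact norm_smul (ω₁ x * ψt (gg p x)) (L x)
    rw [h1, abs_mul, abs_of_nonneg (hω₁0 x), hψt_abs]
    have h2 : ψ (|gg p x|) * ‖L x‖ ≤ Ψ (4 * |u x| + 2 * |v x|) := by
      have h3 : ψ (|gg p x|) * ‖L x‖ ≤ ψ (|gg p x|) * (|u x| + |v x|) :=
        mul_le_mul_of_nonneg_left (hL_norm x) (hψnn _ (abs_nonneg _))
      exact h3.trans (hmain x _ (habs_g x p hp))
    rw [mul_assoc]
    exact mul_le_mul_of_nonneg_left h2 (hω₁0 x)
  have hΦbound : ∀ (x : Ω) (p : ℝ × ℝ), ‖p‖ < 1/2 →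
      ‖ω₁ x * Φ (gg p x)‖ ≤ ω₁ x * Ψ (4 * |u x| + 2 * |v x|) := by
    intro x p hp
    have h1 : Φ (gg p x) = Φ (|gg p x|) := hΦabs _
    have h2 : 0 ≤ Φ (|gg p x|) := hΦnn _ (abs_nonneg _)
    have h3 : Φ (|gg p x|) ≤ Ψ (4 * |u x| + 2 * |v x|) := by
      rw [hΨΦ x]
      exact hΦmono _ _ (abs_nonneg _) (by linarith [habs_g x p hp, abs_nonneg (gg p x)])
    rw [Real.norm_eq_abs, abs_mul, abs_of_nonneg (hω₁0 x), h1,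
      abs_of_nonneg h2]
    exact mul_le_mul_of_nonneg_left h3 (hω₁0 x)
  -- measurability
  have hgg_meas : ∀ p : ℝ × ℝ, Measurable (fun x => gg p x) :=
    fun p => ((hu.abs.const_mul (1 - p.1)).add (hv.abs.const_mul p.2))
  have hmeasΦg : ∀ p : ℝ × ℝ,
      AEStronglyMeasurable (fun x => ω₁ x * Φ (gg p x)) μ := fun p =>
    (hω₁.mul (hΦc.measurable.comp (hgg_meas p))).aestronglyMeasurable
  have hF'eq : ∀ p : ℝ × ℝ, F' p = fun x =>
      (-(ω₁ x * ψt (gg p x) * |u x|)) • fstL + (ω₁ x * ψt (gg p x) * |v x|) • sndL := by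
    intro p
    funext x
    rw [hF'_def]
    simp only [hL_def, smul_add, smul_smul]
    congr 1 <;> congr 1 <;> ring
  have hF'meas : ∀ p : ℝ × ℝ, AEStronglyMeasurable (F' p) μ := by
    intro p
    rw [hF'eq p]
    have hm1 : Measurable fun x => -(ω₁ x * ψt (gg p x) * |u x|) :=
      (((hω₁.mul (hψtc.measurable.comp (hgg_meas p))).mul hu.abs)).neg
    have hm2 : Measurable fun x => ω₁ x * ψt (gg p x) * |v x| :=
      ((hω₁.mul (hψtc.measurable.comp (hgg_meas p))).mul hv.abs)
    exact (hm1.aestronglyMeasurable.smul_const fstL).add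
      (hm2.aestronglyMeasurable.smul_const sndL)
  -- base integrability
  have hInt_base : ∀ p : ℝ × ℝ, ‖p‖ < 1/2 →
      Integrable (fun x => ω₁ x * Φ (gg p x)) μ := fun p hp =>
    hint.mono' (hmeasΦg p) (ae_of_all _ fun x => hΦbound x p hp)
  -- pointwise differentiability
  have hptdiff : ∀ (x : Ω) (p : ℝ × ℝ),
      HasFDerivAt (fun p => ω₁ x * Φ (gg p x)) (F' p x) p := by
    intro x p
    have h1 := (hΦd (gg p x)).comp_hasFDerivAt p (hgL x p)
    have h2 := h1.const_mul (ω₁ x)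
    refine h2.congr_fderiv ?_
    rw [hF'_def]
    rw [smul_smul]
  -- derivative of Fn
  have hFd : ∀ p₀ : ℝ × ℝ, ‖p₀‖ < 1/4 →
      HasFDerivAt Fn (∫ x, F' p₀ x ∂μ) p₀ := by
    intro p₀ hp₀
    have hball : ∀ p ∈ Metric.ball p₀ (1/4), ‖p‖ < 1/2 := by
      intro p hp
      rw [Metric.mem_ball, dist_eq_norm] at hp
      calc ‖p‖ = ‖p - p₀ + p₀‖ := by ring_nf
        _ ≤ ‖p - p₀‖ + ‖p₀‖ := norm_add_le _ _
        _ < 1/4 + 1/4 := by linarith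
        _ = 1/2 := by norm_num
    apply hasFDerivAt_integral_of_dominated_of_fderiv_le (s := Metric.ball p₀ (1/4))
      (bound := fun x => ω₁ x * Ψ (4 * |u x| + 2 * |v x|)) (Metric.ball_mem_nhds _ (by norm_num))
      (Eventually.of_forall fun p => hmeasΦg p)
      (hInt_base p₀ (hball _ (Metric.mem_ball_self (by norm_num)))) (hF'meas p₀)
      (ae_of_all _ fun x p hp => hbound_ptwise x p (hball p hp)) hint
      (ae_of_all _ fun x p _ => hptdiff x p)
  -- continuity of the derivative
  have hF'cont : ContinuousOn (fun p => ∫ x, F' p x ∂μ)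
      (Metric.ball (0:ℝ×ℝ) (1/4)) := by
    intro p₀ hp₀
    apply ContinuousAt.continuousWithinAt
    have hev : ∀ᶠ p in 𝓝 p₀, ‖p‖ < 1/2 := by
      have hopen : Metric.ball (0:ℝ×ℝ) (1/2) ∈ 𝓝 p₀ := by
        apply Metric.isOpen_ball.mem_nhds
        rw [Metric.mem_ball] at hp₀ ⊢
        linarith
      filter_upwards [hopen] with p hp
      rwa [Metric.mem_ball, dist_zero_right] at hp
    apply continuousAt_of_dominated (Eventually.of_forall hF'meas) ?_ hint ?_
    · filter_upwards [hev] with p hp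
      exact ae_of_all _ fun x => hbound_ptwise x p hp
    · refine ae_of_all _ fun x => ?_
      have hgc : ContinuousAt (fun p : ℝ × ℝ => gg p x) p₀ := (hgL x p₀).continuousAt
      have h1 : ContinuousAt (fun p : ℝ × ℝ => (ω₁ x * ψt (gg p x)) • L x) p₀ :=
        ((continuousAt_const.mul (hψtc.continuousAt.comp hgc)).smul continuousAt_const)
      exact h1
  -- Fn is C¹ at 0
  have hFC1 : ContDiffAt ℝ 1 Fn 0 := by
    rw [contDiffAt_one_iff]
    refine ⟨fun p => ∫ x, F' p x ∂μ, Metric.ball 0 (1/4),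
      Metric.ball_mem_nhds _ (by norm_num), hF'cont, fun p hp => hFd p ?_⟩
    rwa [Metric.mem_ball, dist_zero_right] at hp
  -- integrability of the coefficient functions
  have hψA_meas : Measurable fun x => ψ (|u x|) := by
    have h : (fun x => ψ (|u x|)) = fun x => ψ (max (|u x|) 0) := by
      funext x; rw [max_eq_left (abs_nonneg _)]
    rw [h]
    exact cont_max.measurable.comp hu.abs
  have hmain' : ∀ x : Ω, ψ (|u x|) * (|u x| + |v x|) ≤ Ψ (4 * |u x| + 2 * |v x|) := by
    intro x
    have h1 := hmain x (u x) (by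
      have := abs_nonneg (u x); have := abs_nonneg (v x); linarith)
    exact h1
  have hc1int : Integrable (fun x => ω₁ x * ψ (|u x|) * |u x|) μ := by
    refine hint.mono' (((hω₁.mul hψA_meas).mul hu.abs).aestronglyMeasurable)
      (ae_of_all _ fun x => ?_)
    have hψx := hψnn _ (abs_nonneg (u x))
    have h1 : (0:ℝ) ≤ ω₁ x * ψ (|u x|) * |u x| := by
      have := hω₁0 x; positivity
    rw [Real.norm_eq_abs, abs_of_nonneg h1]
    have h2 : ψ (|u x|) * |u x| ≤ Ψ (4 * |u x| + 2 * |v x|) := by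
      have h3 : ψ (|u x|) * |u x| ≤ ψ (|u x|) * (|u x| + |v x|) :=
        mul_le_mul_of_nonneg_left (by have := abs_nonneg (v x); linarith) hψx
      exact h3.trans (hmain' x)
    calc ω₁ x * ψ (|u x|) * |u x| = ω₁ x * (ψ (|u x|) * |u x|) := by ring
      _ ≤ ω₁ x * Ψ (4 * |u x| + 2 * |v x|) := mul_le_mul_of_nonneg_left h2 (hω₁0 x)
  have hc2int : Integrable (fun x => ω₁ x * ψ (|u x|) * |v x|) μ := by
    refine hint.mono' (((hω₁.mul hψA_meas).mul hv.abs).aestronglyMeasurable)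
      (ae_of_all _ fun x => ?_)
    have hψx := hψnn _ (abs_nonneg (u x))
    have h1 : (0:ℝ) ≤ ω₁ x * ψ (|u x|) * |v x| := by
      have := hω₁0 x; positivity
    rw [Real.norm_eq_abs, abs_of_nonneg h1]
    have h2 : ψ (|u x|) * |v x| ≤ Ψ (4 * |u x| + 2 * |v x|) := by
      have h3 : ψ (|u x|) * |v x| ≤ ψ (|u x|) * (|u x| + |v x|) :=
        mul_le_mul_of_nonneg_left (by have := abs_nonneg (u x); linarith) hψx
      exact h3.trans (hmain' x)
    calc ω₁ x * ψ (|u x|) * |v x| = ω₁ x * (ψ (|u x|) * |v x|) := by ring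
      _ ≤ ω₁ x * Ψ (4 * |u x| + 2 * |v x|) := mul_le_mul_of_nonneg_left h2 (hω₁0 x)
  -- the derivative of Fn at 0
  set aI : ℝ := ∫ x, ω₁ x * ψ (|u x|) * |u x| ∂μ with haI_def
  set bI : ℝ := ∫ x, ω₁ x * ψ (|u x|) * |v x| ∂μ with hbI_def
  have hbne : bI ≠ 0 := ne_of_gt hpos_v
  have hgg0 : ∀ x, gg 0 x = |u x| := by
    intro x; simp [hgg_def]
  have hF'0eq : F' 0 = fun x =>
      (-(ω₁ x * ψ (|u x|) * |u x|)) • fstL + (ω₁ x * ψ (|u x|) * |v x|) • sndL := by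
    rw [hF'eq 0]
    funext x
    rw [hgg0 x, hψt_eq _ (abs_nonneg _)]
  set e₀ : ℝ × ℝ →L[ℝ] ℝ := (-aI) • fstL + bI • sndL with he₀_def
  have hIntF'0 : (∫ x, F' 0 x ∂μ) = e₀ := by
    have h1 : (∫ x, F' 0 x ∂μ) = ∫ x, ((-(ω₁ x * ψ (|u x|) * |u x|)) • fstL
        + (ω₁ x * ψ (|u x|) * |v x|) • sndL) ∂μ :=
      integral_congr_ae (ae_of_all _ fun x => congrFun hF'0eq x)
    have hfi : Integrable (fun x => (-(ω₁ x * ψ (|u x|) * |u x|)) • fstL) μ :=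
      (hc1int.neg).smul_const fstL
    have hgi : Integrable (fun x => (ω₁ x * ψ (|u x|) * |v x|) • sndL) μ :=
      hc2int.smul_const sndL
    rw [h1]
    rw [integral_add hfi hgi]
    rw [integral_smul_const, integral_smul_const, integral_neg]
  have hFd0 : HasFDerivAt Fn e₀ 0 := by
    have h := hFd 0 (by rw [norm_zero]; norm_num)
    rwa [hIntF'0] at h
  -- the map GG and its invertible derivative
  set GG : ℝ × ℝ → ℝ × ℝ := fun p => (p.1, Fn p) with hGG_def
  have hGC1 : ContDiffAt ℝ 1 GG 0 := (contDiffAt_fst).prodMk hFC1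
  set f₁ : ℝ × ℝ →L[ℝ] ℝ × ℝ := fstL.prod e₀ with hf₁_def
  set f₂ : ℝ × ℝ →L[ℝ] ℝ × ℝ := fstL.prod ((aI/bI) • fstL + (1/bI) • sndL)
    with hf₂_def
  have happly₁ : ∀ q : ℝ × ℝ, f₁ q = (q.1, -aI * q.1 + bI * q.2) := by
    intro q
    simp only [hf₁_def, he₀_def, hfstL_def, hsndL_def, ContinuousLinearMap.prod_apply,
      ContinuousLinearMap.add_apply, ContinuousLinearMap.coe_smul', Pi.smul_apply,
      ContinuousLinearMap.coe_fst', ContinuousLinearMap.coe_snd', smul_eq_mul]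
    try ring_nf
  have happly₂ : ∀ q : ℝ × ℝ, f₂ q = (q.1, (aI/bI) * q.1 + (1/bI) * q.2) := by
    intro q
    simp only [hf₂_def, hfstL_def, hsndL_def, ContinuousLinearMap.prod_apply,
      ContinuousLinearMap.add_apply, ContinuousLinearMap.coe_smul', Pi.smul_apply,
      ContinuousLinearMap.coe_fst', ContinuousLinearMap.coe_snd', smul_eq_mul]
  have hleft : Function.LeftInverse f₂ f₁ := by
    intro q
    rw [happly₁, happly₂]
    refine Prod.ext rfl ?_
    simp only
    field_simp
    try ring
  have hright : Function.RightInverse f₂ f₁ := by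
    intro q
    rw [happly₂, happly₁]
    refine Prod.ext rfl ?_
    simp only
    field_simp
    ring
  set e : (ℝ × ℝ) ≃L[ℝ] (ℝ × ℝ) :=
    ContinuousLinearEquiv.equivOfInverse f₁ f₂ hleft hright with he_def
  have hcoe : (e : (ℝ × ℝ) →L[ℝ] (ℝ × ℝ)) = f₁ := rfl
  have hGd : HasFDerivAt GG (e : (ℝ × ℝ) →L[ℝ] (ℝ × ℝ)) 0 := by
    rw [hcoe, hf₁_def]
    exact HasFDerivAt.prodMk hasFDerivAt_fst hFd0
  have hstrict : HasStrictFDerivAt GG (e : (ℝ × ℝ) →L[ℝ] (ℝ × ℝ)) 0 :=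
    hGC1.hasStrictFDerivAt' hGd one_ne_zero
  set ginv : ℝ × ℝ → ℝ × ℝ := hstrict.localInverse GG e 0 with hginv_def
  have hginvC1 : ContDiffAt ℝ 1 ginv (GG 0) := hGC1.to_localInverse hGd one_ne_zero
  have hrinv : ∀ᶠ w in 𝓝 (GG 0), GG (ginv w) = w := hstrict.eventually_right_inverse
  have hginv0 : ginv (GG 0) = 0 := hstrict.localInverse_apply_image
  have hginv_strict : HasStrictFDerivAt ginv
      ((e.symm : (ℝ × ℝ) →L[ℝ] (ℝ × ℝ))) (GG 0) := hstrict.to_localInverse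
  set c : ℝ := Fn 0 with hc_def
  have hGG0 : GG 0 = (0, c) := by
    simp only [hGG_def, hc_def, Prod.fst_zero]
  set δf : ℝ → ℝ := fun ε => (ginv (ε, c)).2 with hδf_def
  set ι : ℝ → ℝ × ℝ := fun ε => (ε, c) with hι_def
  have hι0 : ι 0 = GG 0 := by rw [hGG0]
  have hιC : ContDiff ℝ 1 ι := contDiff_id.prodMk contDiff_const
  have hδC1 : ContDiffAt ℝ 1 δf 0 := by
    have h1 : ContDiffAt ℝ 1 ginv (ι 0) := by rw [hι0]; exact hginvC1
    have h2 : ContDiffAt ℝ 1 (fun ε => ginv (ι ε)) 0 := h1.comp 0 hιC.contDiffAt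
    exact (contDiff_snd.contDiffAt).comp 0 h2
  have hδ0 : δf 0 = 0 := by
    have h1 : ginv (ι 0) = 0 := by rw [hι0]; exact hginv0
    have h2 : δf 0 = (ginv (ι 0)).2 := rfl
    rw [h2, h1]
    rfl
  -- the derivative of δf at 0
  have hι_d : HasDerivAt ι ((1:ℝ), (0:ℝ)) 0 :=
    HasDerivAt.prodMk (hasDerivAt_id (0:ℝ)) (hasDerivAt_const (0:ℝ) c)
  have hd1 : HasFDerivAt ginv ((e.symm : (ℝ × ℝ) →L[ℝ] (ℝ × ℝ))) (ι 0) := by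
    rw [hι0]; exact hginv_strict.hasFDerivAt
  have hd2 : HasDerivAt (fun ε => ginv (ι ε))
      ((e.symm : (ℝ × ℝ) →L[ℝ] (ℝ × ℝ)) (1, 0)) 0 :=
    hd1.comp_hasDerivAt 0 hι_d
  have hd3 : HasDerivAt δf ((sndL) ((e.symm : (ℝ × ℝ) →L[ℝ] (ℝ × ℝ)) (1, 0))) 0 :=
    sndL.hasFDerivAt.comp_hasDerivAt 0 hd2
  have hesymm : (e.symm : (ℝ × ℝ) →L[ℝ] (ℝ × ℝ)) (1, 0) = (1, aI/bI) := by
    have h5 : e.symm = ContinuousLinearEquiv.equivOfInverse f₂ f₁ hright hleft := by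
      rw [he_def]
      exact ContinuousLinearEquiv.symm_equivOfInverse f₁ f₂ hleft hright
    have h6 : (e.symm : (ℝ × ℝ) →L[ℝ] (ℝ × ℝ)) (1, 0) = f₂ (1, 0) := by
      rw [h5]; rfl
    rw [h6, happly₂]
    exact Prod.ext rfl (by ring)
  have hderiv : deriv δf 0 = aI / bI := by
    have h7 := hd3
    rw [hesymm] at h7
    have h8 : sndL ((1:ℝ), aI/bI) = aI/bI := rfl
    rw [h8] at h7
    exact h7.deriv
  -- assembling the data
  obtain ⟨s, hs, hδon⟩ := hδC1.contDiffOn le_rfl (by simp)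
  have hev2 : ∀ᶠ ε in 𝓝 (0:ℝ), Fn (ε, δf ε) = c := by
    have hι_t : Tendsto ι (𝓝 0) (𝓝 (GG 0)) := by
      rw [← hι0]
      exact (hιC.continuous.tendsto 0)
    filter_upwards [hι_t.eventually hrinv] with ε hε
    have h1 : (ginv (ι ε)).1 = ε := by
      have := congrArg Prod.fst hε
      simpa [hGG_def, hι_def] using this
    have h2 : Fn (ginv (ι ε)) = c := by
      have := congrArg Prod.snd hε
      simpa [hGG_def, hι_def] using this
    have h3 : ginv (ι ε) = (ε, δf ε) := by
      refine Prod.ext h1 rfl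
    rw [← h3]
    exact h2
  have hmem : s ∩ {ε | Fn (ε, δf ε) = c} ∈ 𝓝 (0:ℝ) := inter_mem hs hev2
  obtain ⟨ε₀, hε₀pos, hball⟩ := Metric.mem_nhds_iff.mp hmem
  refine ⟨ε₀, hε₀pos, δf, ?_, hδ0, hderiv, ?_⟩
  · refine hδon.mono ?_
    intro ε hε
    have h9 : ε ∈ Metric.ball (0:ℝ) ε₀ := by
      rw [Real.ball_eq_Ioo, zero_sub, zero_add]
      exact hε
    exact (hball h9).1
  · intro ε hε
    have h9 : ε ∈ Metric.ball (0:ℝ) ε₀ := by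
      rw [Real.ball_eq_Ioo, zero_sub, zero_add]
      exact hε
    have h5 : Fn (ε, δf ε) = c := (hball h9).2
    have e1 : (∫ x, ω₁ x * Ψ (abs ((1 - ε) * |u x| + δf ε * |v x|)) ∂μ)
        = Fn (ε, δf ε) := by
      rw [hFn_def]
      refine integral_congr_ae (ae_of_all _ fun x => ?_)
      simp only [hgg_def]
      congr 1
      rw [← hΦeqΨ _ (abs_nonneg _), ← hΦabs]
    have e2 : (∫ x, ω₁ x * Ψ (|u x|) ∂μ) = c := by
      rw [hc_def, hFn_def]
      refine integral_congr_ae (ae_of_all _ fun x => ?_)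
      simp only [hgg_def, Prod.fst_zero, Prod.snd_zero, sub_zero, one_mul,
        zero_mul, add_zero]
      congr 1
      exact (hΦeqΨ _ (abs_nonneg _)).symm
    rw [e1, h5, ← e2]
end

section
/- Let X and Y be real Banach spaces, let A : X → Y and B : X → ℝ be continuous linear maps, and suppose that the range of A is closed in Y. If B h = 0 for every h ∈ X with A h = 0 (i.e., ker A ⊆ ker B), then there exists a continuous linear functional Λ : Y → ℝ such that B k + Λ(A k) = 0 for all k ∈ X. -/
open Filter Set MeasureTheory

/-- Lagrange multiplier type result: if `ker A ⊆ ker B` and `A` has closed range, then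
`B` factors (with a sign) through `A` via a continuous functional `Λ` on `Y`. -/
theorem lagrange_multiplier_abstract
    {X Y : Type*} [NormedAddCommGroup X] [NormedSpace ℝ X] [CompleteSpace X]
    [NormedAddCommGroup Y] [NormedSpace ℝ Y] [CompleteSpace Y]
    (A : X →L[ℝ] Y) (B : X →L[ℝ] ℝ)
    (hclosed : IsClosed (Set.range A))
    (hker : ∀ h : X, A h = 0 → B h = 0) :
    ∃ Λ : Y →L[ℝ] ℝ, ∀ k : X, B k + Λ (A k) = 0 := by
  classical
  set K : Submodule ℝ X := LinearMap.ker (A : X →ₗ[ℝ] Y) with hK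
  haveI hKclosed : IsClosed (K : Set X) := ContinuousLinearMap.isClosed_ker A
  set Z : Submodule ℝ Y := LinearMap.range (A : X →ₗ[ℝ] Y) with hZ
  have hZset : (Z : Set Y) = Set.range A := by
    ext y; simp [hZ, LinearMap.mem_range]
  haveI : CompleteSpace Z := by
    have : IsClosed (Z : Set Y) := by rw [hZset]; exact hclosed
    exact this.completeSpace_coe
  -- lift of B to the quotient
  have hkerB : K ≤ LinearMap.ker (B : X →ₗ[ℝ] ℝ) := fun x hx => hker x hx
  set Bbarₗ : (X ⧸ K) →ₗ[ℝ] ℝ := K.liftQ (B : X →ₗ[ℝ] ℝ) hkerB with hBbar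
  have hBcont : Continuous Bbarₗ := by
    rw [← K.isOpenQuotientMap_mkQ.continuous_comp_iff]
    exact B.continuous
  set Bbar : (X ⧸ K) →L[ℝ] ℝ := ⟨Bbarₗ, hBcont⟩ with hBbar'
  -- lift of A to the quotient, corestricted to its range
  set Aqₗ : (X ⧸ K) →ₗ[ℝ] Y := K.liftQ (A : X →ₗ[ℝ] Y) le_rfl with hAq
  have hAqmem : ∀ q : X ⧸ K, Aqₗ q ∈ Z := by
    intro q
    induction q using Submodule.Quotient.induction_on with
    | _ x => exact ⟨x, rfl⟩
  set Abarₗ : (X ⧸ K) →ₗ[ℝ] Z := Aqₗ.codRestrict Z hAqmem with hAbar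
  have hAqcont : Continuous Aqₗ := by
    rw [← K.isOpenQuotientMap_mkQ.continuous_comp_iff]
    exact A.continuous
  have hAbarcont : Continuous Abarₗ := Continuous.subtype_mk hAqcont _
  set Abar : (X ⧸ K) →L[ℝ] Z := ⟨Abarₗ, hAbarcont⟩ with hAbar'
  have hinj : LinearMap.ker (Abar : (X ⧸ K) →ₗ[ℝ] Z) = ⊥ := by
    rw [Submodule.eq_bot_iff]
    intro q hq
    induction q using Submodule.Quotient.induction_on with
    | _ x =>
      have : A x = 0 := by
        have := congrArg (Subtype.val) hq
        simpa [hAbar', hAbar, hAq] using this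
      simpa [Submodule.Quotient.mk_eq_zero, hK] using this
  have hsurj : LinearMap.range (Abar : (X ⧸ K) →ₗ[ℝ] Z) = ⊤ := by
    rw [LinearMap.range_eq_top]
    rintro ⟨y, x, rfl⟩
    exact ⟨Submodule.Quotient.mk x, rfl⟩
  set e : (X ⧸ K) ≃L[ℝ] Z := ContinuousLinearEquiv.ofBijective Abar hinj hsurj with he
  set Λ₀ : Z →L[ℝ] ℝ := -(Bbar.comp (e.symm : Z →L[ℝ] (X ⧸ K))) with hΛ₀
  obtain ⟨g, hg, -⟩ := exists_extension_norm_eq Z Λ₀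
  refine ⟨g, fun k => ?_⟩
  have hAkZ : A k ∈ Z := ⟨k, rfl⟩
  have h1 : g (A k) = Λ₀ ⟨A k, hAkZ⟩ := hg ⟨A k, hAkZ⟩
  have h2 : e.symm ⟨A k, hAkZ⟩ = Submodule.Quotient.mk k := by
    apply e.injective
    rw [ContinuousLinearEquiv.apply_symm_apply]
    rfl
  rw [h1, hΛ₀]
  simp only [ContinuousLinearMap.neg_apply, ContinuousLinearMap.comp_apply,
    ContinuousLinearEquiv.coe_coe, h2]
  have h3 : Bbar (Submodule.Quotient.mk k) = B k := rfl
  rw [h3]; ring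
end
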